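/- Degenerate case of the Dunkl-type representation: if λ = (2m+1)/4 for some m ∈ ℕ (i.e. λ = h + 1/4 with 2h = m ∈ ℕ), then ρ₊(z^{2m+1}) = 0, the subspace W = span{z^ℓ : ℓ ≥ 2m+1} of Polynomial ℂ is invariant under ρ₊, ρ₋, and P, the only subspaces of W invariant under ρ₊, ρ₋, and P are the zero subspace and W itself, and the quotient (Polynomial ℂ)/W has ℂ-dimension 2m+1 (that is, 4h+1). -/

import Mathlib

noncomputable section

open Polynomial

/-- The multiplication-by-`z` operator `M_z` on `ℂ[z]`. -/
def Mz : Module.End ℂ (Polynomial ℂ) := LinearMap.mulLeft ℂ (X : Polynomial ℂ)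

/-- The derivative operator `D` on `ℂ[z]`. -/
def Dop : Module.End ℂ (Polynomial ℂ) :=
  (Polynomial.derivative : Polynomial ℂ →ₗ[ℂ] Polynomial ℂ)

/-- The parity operator `P` on `ℂ[z]`: the algebra map `z ↦ −z`,
i.e. `h(z) ↦ h(−z)`, viewed as a ℂ-linear endomorphism. -/
def Pop : Module.End ℂ (Polynomial ℂ) :=
  (Polynomial.aeval (-(X : Polynomial ℂ)) :
    Polynomial ℂ →ₐ[ℂ] Polynomial ℂ).toLinearMap

/-- The operator `Δ : h ↦ (h(z) − h(−z))/z` on `ℂ[z]`. -/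
def DeltaOp : Module.End ℂ (Polynomial ℂ) where
  toFun h := (h - h.comp (-(X : Polynomial ℂ))).divX
  map_add' h g := by
    show ((h + g) - (h + g).comp (-(X : Polynomial ℂ))).divX = _
    rw [Polynomial.add_comp, add_sub_add_comm, Polynomial.divX_add]
  map_smul' c h := by
    show ((c • h) - (c • h).comp (-(X : Polynomial ℂ))).divX = _
    rw [Polynomial.smul_comp, ← smul_sub, Polynomial.smul_eq_C_mul,
      Polynomial.divX_C_mul, ← Polynomial.smul_eq_C_mul]
    rfl

/-- The operator `ρ₊ = (1/2)D − λΔ`. -/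
def rhoP (lam : ℂ) : Module.End ℂ (Polynomial ℂ) :=
  (1 / 2 : ℂ) • Dop - lam • DeltaOp

/-- The operator `ρ₋ = −(1/2)M_z`. -/
def rhoM : Module.End ℂ (Polynomial ℂ) := -((1 / 2 : ℂ) • Mz)

end

/-!
On monomials `ρ₊ z^n = w(n) z^{n-1}`, with `w(n) = n/2` for even `n` and `w(n) = n/2 - 2λ` for
odd `n`. For `λ = (2m+1)/4` the weight vanishes at `n = 2m+1` and at no larger `n`. Hence `ρ₊`
preserves `W = z^{2m+1} ℂ[z]`, and on a nonzero element of `W` of degree above `2m+1` it lowers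
the degree by exactly one without leaving `W`; iterating, a nonzero `ρ₊`-invariant `U ≤ W`
contains a nonzero multiple of `z^{2m+1}`. Since `ρ₋` is multiplication by `z` up to a scalar,
`U` then contains every `z^ℓ` with `ℓ ≥ 2m+1`, i.e. `U = W`. Finally the first `2m+1`
coefficients identify `ℂ[z]/W` with `ℂ^{2m+1}`.
-/

open Polynomial

namespace Polynomial

section CommSemiring

variable (R : Type*) [CommSemiring R]

noncomputable def spanXPowGE (N : ℕ) : Submodule R R[X] :=
  Submodule.span R ((fun ℓ : ℕ => (X : R[X]) ^ ℓ) '' {ℓ | N ≤ ℓ})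

noncomputable def lowCoeffs (N : ℕ) : R[X] →ₗ[R] Fin N → R :=
  LinearMap.pi fun i => lcoeff R i

variable {R} {N : ℕ}

theorem spanXPowGE_eq_restrictScalars_span_singleton :
    spanXPowGE R N = (Ideal.span {(X : R[X]) ^ N}).restrictScalars R := by
  refine le_antisymm ?_ fun p hp => ?_
  · rw [spanXPowGE, Submodule.span_le]
    rintro _ ⟨ℓ, hℓ, rfl⟩
    exact Ideal.mem_span_singleton.2 (pow_dvd_pow X hℓ)
  · obtain ⟨q, rfl⟩ := Ideal.mem_span_singleton.1 hp
    induction q using Polynomial.induction_on' with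
    | add q r hq hr =>
      rw [mul_add]
      exact add_mem (hq (Ideal.mul_mem_right _ _ (Ideal.mem_span_singleton_self _)))
        (hr (Ideal.mul_mem_right _ _ (Ideal.mem_span_singleton_self _)))
    | monomial k a =>
      rw [← C_mul_X_pow_eq_monomial, mul_left_comm, ← pow_add, ← smul_eq_C_mul]
      exact Submodule.smul_mem _ _ (Submodule.subset_span ⟨N + k, Nat.le_add_right N k, rfl⟩)

theorem mem_spanXPowGE_iff {p : R[X]} : p ∈ spanXPowGE R N ↔ X ^ N ∣ p := by
  rw [spanXPowGE_eq_restrictScalars_span_singleton, Submodule.restrictScalars_mem,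
    Ideal.mem_span_singleton]

theorem X_mul_mem_spanXPowGE {p : R[X]} (hp : p ∈ spanXPowGE R N) : X * p ∈ spanXPowGE R N :=
  mem_spanXPowGE_iff.2 ((mem_spanXPowGE_iff.1 hp).mul_left X)

theorem aeval_mem_spanXPowGE {q p : R[X]} (hq : X ∣ q) (hp : p ∈ spanXPowGE R N) :
    aeval q p ∈ spanXPowGE R N := by
  rw [mem_spanXPowGE_iff] at hp ⊢
  have hmap := _root_.map_dvd (aeval q) hp
  rw [map_pow, aeval_X] at hmap
  exact (pow_dvd_pow_of_dvd hq N).trans hmap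

theorem spanXPowGE_le_of_X_pow_mem {U : Submodule R R[X]} (hN : X ^ N ∈ U)
    (hX : ∀ p ∈ U, X * p ∈ U) : spanXPowGE R N ≤ U := by
  rw [spanXPowGE, Submodule.span_le]
  rintro _ ⟨ℓ, hℓ, rfl⟩
  induction ℓ, hℓ using Nat.le_induction with
  | base => exact hN
  | succ ℓ _ ih => simpa [pow_succ'] using hX _ ih

theorem eq_C_mul_X_pow_of_X_pow_dvd {p : R[X]} (hdvd : X ^ N ∣ p) (hdeg : p.natDegree ≤ N) :
    p = C (p.coeff N) * X ^ N := by
  ext i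
  rw [coeff_C_mul_X_pow]
  rcases lt_trichotomy i N with hi | rfl | hi
  · rw [X_pow_dvd_iff.1 hdvd i hi, if_neg hi.ne]
  · rw [if_pos rfl]
  · rw [coeff_eq_zero_of_natDegree_lt (hdeg.trans_lt hi), if_neg hi.ne']

theorem ker_lowCoeffs : LinearMap.ker (lowCoeffs R N) = spanXPowGE R N := by
  ext p
  simp [lowCoeffs, mem_spanXPowGE_iff, X_pow_dvd_iff, funext_iff, Fin.forall_iff]

theorem lowCoeffs_surjective : Function.Surjective (lowCoeffs R N) := fun v =>
  ⟨(degreeLTEquiv R N).symm v, (degreeLTEquiv R N).apply_symm_apply v⟩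

end CommSemiring

theorem finrank_quotient_spanXPowGE (R : Type*) [CommRing R] [Nontrivial R] (N : ℕ) :
    Module.finrank R (R[X] ⧸ spanXPowGE R N) = N := by
  rw [← ker_lowCoeffs, (LinearMap.quotKerEquivOfSurjective _ lowCoeffs_surjective).finrank_eq,
    Module.finrank_fin_fun]

theorem coeff_comp_neg_X {R : Type*} [Ring R] (p : R[X]) (n : ℕ) :
    (p.comp (-X)).coeff n = (-1) ^ n * p.coeff n := by
  rw [← neg_one_mul (X : R[X]), ← C_1, ← C_neg, comp_C_mul_X_coeff]
  exact ((Commute.neg_one_right _).pow_right n).eq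

end Polynomial

noncomputable def rhoPWeight (lam : ℂ) (n : ℕ) : ℂ := n / 2 - lam * (1 - (-1) ^ n)

theorem rhoPWeight_two_mul (lam : ℂ) (k : ℕ) : rhoPWeight lam (2 * k) = k := by
  simp only [rhoPWeight, pow_mul, neg_one_sq, one_pow, sub_self, mul_zero, sub_zero]
  push_cast
  ring

theorem rhoPWeight_two_mul_add_one (lam : ℂ) (k : ℕ) :
    rhoPWeight lam (2 * k + 1) = (2 * k + 1) / 2 - 2 * lam := by
  rw [rhoPWeight, pow_succ, pow_mul, neg_one_sq, one_pow, one_mul]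
  push_cast
  ring

theorem rhoPWeight_self (m : ℕ) :
    rhoPWeight (((2 * m + 1 : ℕ) : ℂ) / 4) (2 * m + 1) = 0 := by
  rw [rhoPWeight_two_mul_add_one]
  push_cast
  ring

theorem rhoPWeight_ne_zero_of_lt (m : ℕ) {n : ℕ} (hn : 2 * m + 1 < n) :
    rhoPWeight (((2 * m + 1 : ℕ) : ℂ) / 4) n ≠ 0 := by
  obtain ⟨k, rfl | rfl⟩ := Nat.even_or_odd' n
  · rw [rhoPWeight_two_mul]
    exact Nat.cast_ne_zero.2 (by omega)
  · rw [rhoPWeight_two_mul_add_one]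
    have hkm : (k : ℂ) - m ≠ 0 := sub_ne_zero.2 (Nat.cast_injective.ne (by omega))
    push_cast
    intro h
    exact hkm (by linear_combination h)

theorem rhoP_apply (lam : ℂ) (h : ℂ[X]) :
    rhoP lam h = (1 / 2 : ℂ) • derivative h - lam • (h - h.comp (-X)).divX :=
  rfl

theorem coeff_rhoP (lam : ℂ) (h : ℂ[X]) (k : ℕ) :
    (rhoP lam h).coeff k = rhoPWeight lam (k + 1) * h.coeff (k + 1) := by
  simp only [rhoP_apply, coeff_sub, coeff_smul, coeff_divX, coeff_derivative, coeff_comp_neg_X,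
    smul_eq_mul, rhoPWeight]
  push_cast
  ring

theorem natDegree_rhoP_le (lam : ℂ) (h : ℂ[X]) : (rhoP lam h).natDegree ≤ h.natDegree - 1 := by
  rw [natDegree_le_iff_coeff_eq_zero]
  intro k hk
  rw [coeff_rhoP, coeff_eq_zero_of_natDegree_lt (by omega), mul_zero]

theorem coeff_rhoP_natDegree_sub_one (lam : ℂ) {h : ℂ[X]} (hd : h.natDegree ≠ 0) :
    (rhoP lam h).coeff (h.natDegree - 1) = rhoPWeight lam h.natDegree * h.leadingCoeff := by
  rw [coeff_rhoP, Nat.sub_add_cancel (Nat.pos_of_ne_zero hd), leadingCoeff]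

theorem rhoP_X_pow_eq_zero {lam : ℂ} {N : ℕ} (hw : rhoPWeight lam N = 0) :
    rhoP lam (X ^ N) = 0 := by
  ext k
  rw [coeff_rhoP, coeff_X_pow, coeff_zero]
  split_ifs with hk
  · rw [hk, hw, zero_mul]
  · rw [mul_zero]

theorem rhoP_mem_spanXPowGE {lam : ℂ} {N : ℕ} (hw : rhoPWeight lam N = 0) {h : ℂ[X]}
    (hh : h ∈ spanXPowGE ℂ N) : rhoP lam h ∈ spanXPowGE ℂ N := by
  rw [mem_spanXPowGE_iff, X_pow_dvd_iff] at hh ⊢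
  intro i hi
  rw [coeff_rhoP]
  rcases (show i + 1 ≤ N from hi).eq_or_lt with hN | hN
  · rw [hN, hw, zero_mul]
  · rw [hh _ hN, mul_zero]

theorem rhoM_apply (h : ℂ[X]) : rhoM h = (-(1 / 2) : ℂ) • (X * h) := by
  change -((1 / 2 : ℂ) • (X * h)) = _
  rw [neg_smul]

theorem rhoM_mem_spanXPowGE {N : ℕ} {h : ℂ[X]} (hh : h ∈ spanXPowGE ℂ N) :
    rhoM h ∈ spanXPowGE ℂ N := by
  rw [rhoM_apply]
  exact Submodule.smul_mem _ _ (X_mul_mem_spanXPowGE hh)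

theorem Pop_mem_spanXPowGE {N : ℕ} {h : ℂ[X]} (hh : h ∈ spanXPowGE ℂ N) :
    Pop h ∈ spanXPowGE ℂ N := by
  change aeval (-X) h ∈ _
  exact aeval_mem_spanXPowGE (dvd_neg.2 dvd_rfl) hh

theorem X_mul_mem_of_rhoM_mem {U : Submodule ℂ ℂ[X]} (hU : ∀ h ∈ U, rhoM h ∈ U) {h : ℂ[X]}
    (hh : h ∈ U) : X * h ∈ U := by
  have hX : X * h = (-2 : ℂ) • rhoM h := by
    rw [rhoM_apply, smul_smul]
    norm_num
  rw [hX]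
  exact U.smul_mem _ (hU h hh)

theorem X_pow_mem_of_rhoP_invariant {lam : ℂ} {N : ℕ} (hw : ∀ n, N < n → rhoPWeight lam n ≠ 0)
    {U : Submodule ℂ ℂ[X]} (hU : U ≤ spanXPowGE ℂ N) (hinv : ∀ h ∈ U, rhoP lam h ∈ U)
    {h : ℂ[X]} (hh : h ∈ U) (h0 : h ≠ 0) : X ^ N ∈ U := by
  induction hd : h.natDegree using Nat.strong_induction_on generalizing h with
  | _ d ih =>
  have hdvd : X ^ N ∣ h := mem_spanXPowGE_iff.1 (hU hh)
  have hNd : N ≤ d := by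
    simpa [hd] using natDegree_le_of_dvd hdvd h0
  rcases hNd.eq_or_lt with rfl | hlt
  · have hc : h.coeff N ≠ 0 := by
      rw [← hd]
      exact leadingCoeff_ne_zero.2 h0
    rw [eq_C_mul_X_pow_of_X_pow_dvd hdvd hd.le, ← smul_eq_C_mul] at hh
    simpa [smul_smul, hc] using U.smul_mem (h.coeff N)⁻¹ hh
  · have hc : (rhoP lam h).coeff (d - 1) ≠ 0 := by
      rw [← hd, coeff_rhoP_natDegree_sub_one lam (by omega), hd]
      exact mul_ne_zero (hw d hlt) (leadingCoeff_ne_zero.2 h0)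
    have hlt' : (rhoP lam h).natDegree < d := by
      have := natDegree_rhoP_le lam h
      omega
    exact ih _ hlt' (hinv h hh) (fun h'0 => hc (h'0 ▸ coeff_zero _)) rfl

theorem eq_bot_or_eq_spanXPowGE_of_invariant {lam : ℂ} {N : ℕ}
    (hw : ∀ n, N < n → rhoPWeight lam n ≠ 0) {U : Submodule ℂ ℂ[X]} (hU : U ≤ spanXPowGE ℂ N)
    (hP : ∀ h ∈ U, rhoP lam h ∈ U) (hM : ∀ h ∈ U, rhoM h ∈ U) :
    U = ⊥ ∨ U = spanXPowGE ℂ N := by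
  refine or_iff_not_imp_left.2 fun hne => hU.antisymm ?_
  obtain ⟨h, hh, h0⟩ := U.ne_bot_iff.1 hne
  exact spanXPowGE_le_of_X_pow_mem (X_pow_mem_of_rhoP_invariant hw hU hP hh h0)
    fun _ => X_mul_mem_of_rhoM_mem hM

open Polynomial in
/-- Degenerate case of the Dunkl-type representation, for `λ = (2m+1)/4`:
`ρ₊(z^{2m+1}) = 0`; the subspace `W = span{z^ℓ : ℓ ≥ 2m+1}` is invariant under
`ρ₊`, `ρ₋`, `P`; the only invariant subspaces of `W` are `⊥` and `W`; and the
quotient `ℂ[z]/W` has ℂ-dimension `2m+1` (that is, `4h+1`). -/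
theorem dunkl_degenerate (m : ℕ) (lam : ℂ)
    (hlam : lam = ((2 * m + 1 : ℕ) : ℂ) / 4) :
    rhoP lam ((X : Polynomial ℂ) ^ (2 * m + 1)) = 0 ∧
      (∀ h ∈ Submodule.span ℂ
          ((fun ℓ : ℕ => (X : Polynomial ℂ) ^ ℓ) '' {ℓ | 2 * m + 1 ≤ ℓ}),
        rhoP lam h ∈ Submodule.span ℂ
          ((fun ℓ : ℕ => (X : Polynomial ℂ) ^ ℓ) '' {ℓ | 2 * m + 1 ≤ ℓ}) ∧
        rhoM h ∈ Submodule.span ℂ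
          ((fun ℓ : ℕ => (X : Polynomial ℂ) ^ ℓ) '' {ℓ | 2 * m + 1 ≤ ℓ}) ∧
        Pop h ∈ Submodule.span ℂ
          ((fun ℓ : ℕ => (X : Polynomial ℂ) ^ ℓ) '' {ℓ | 2 * m + 1 ≤ ℓ})) ∧
      (∀ U : Submodule ℂ (Polynomial ℂ),
        U ≤ Submodule.span ℂ
            ((fun ℓ : ℕ => (X : Polynomial ℂ) ^ ℓ) '' {ℓ | 2 * m + 1 ≤ ℓ}) →
        (∀ h ∈ U, rhoP lam h ∈ U) → (∀ h ∈ U, rhoM h ∈ U) → (∀ h ∈ U, Pop h ∈ U) →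
        U = ⊥ ∨
          U = Submodule.span ℂ
            ((fun ℓ : ℕ => (X : Polynomial ℂ) ^ ℓ) '' {ℓ | 2 * m + 1 ≤ ℓ})) ∧
      Module.finrank ℂ
          (Polynomial ℂ ⧸ Submodule.span ℂ
            ((fun ℓ : ℕ => (X : Polynomial ℂ) ^ ℓ) '' {ℓ | 2 * m + 1 ≤ ℓ})) =
        2 * m + 1 := by
  subst hlam
  rw [← spanXPowGE]
  have hw := rhoPWeight_self m
  refine ⟨rhoP_X_pow_eq_zero hw, fun h hh => ?_, fun U hU hP hM _ => ?_,
    finrank_quotient_spanXPowGE ℂ _⟩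
  · exact ⟨rhoP_mem_spanXPowGE hw hh, rhoM_mem_spanXPowGE hh, Pop_mem_spanXPowGE hh⟩
  · exact eq_bot_or_eq_spanXPowGE_of_invariant (fun _ => rhoPWeight_ne_zero_of_lt m) hU hP hM
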